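/- arXiv:2504.14844 — 2 statements merged into one kernel-verified Lean document; each statement's English description precedes it below -/
import Mathlib

section
/- Over a field $\Bbbk$, the bound quiver given by the $2\times 2$ commutative grid (vertices $1,2,3,4$, arrows $1\to2$, $1\to3$, $2\to4$, $3\to4$, relation: the two paths $1 \to 4$ agree) has exactly eleven isomorphism classes of indecomposable representations, namely the representations $M(\nu_1,\nu_2,\nu_3,\nu_4)$ with all $\nu_i \in \{0,1\}$, identity maps where possible, for the dimension vectors $(1,0,0,0)$, $(0,1,0,0)$, $(0,0,1,0)$, $(0,0,0,1)$, $(1,1,0,0)$, $(1,0,1,0)$, $(0,1,0,1)$, $(0,0,1,1)$, $(1,1,1,0)$, $(0,1,1,1)$, $(1,1,1,1)$. -/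
/-- A finite-dimensional representation of the commutative `2 × 2` grid bound quiver. -/
structure GridRep (𝕜 : Type) [Field 𝕜] : Type 1 where
  V1 : Type
  V2 : Type
  V3 : Type
  V4 : Type
  [g1 : AddCommGroup V1]
  [g2 : AddCommGroup V2]
  [g3 : AddCommGroup V3]
  [g4 : AddCommGroup V4]
  [m1 : Module 𝕜 V1]
  [m2 : Module 𝕜 V2]
  [m3 : Module 𝕜 V3]
  [m4 : Module 𝕜 V4]
  [fd1 : FiniteDimensional 𝕜 V1]
  [fd2 : FiniteDimensional 𝕜 V2]
  [fd3 : FiniteDimensional 𝕜 V3]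
  [fd4 : FiniteDimensional 𝕜 V4]
  f12 : V1 →ₗ[𝕜] V2
  f13 : V1 →ₗ[𝕜] V3
  f24 : V2 →ₗ[𝕜] V4
  f34 : V3 →ₗ[𝕜] V4
  comm : f24 ∘ₗ f12 = f34 ∘ₗ f13

attribute [instance] GridRep.g1 GridRep.g2 GridRep.g3 GridRep.g4
  GridRep.m1 GridRep.m2 GridRep.m3 GridRep.m4
  GridRep.fd1 GridRep.fd2 GridRep.fd3 GridRep.fd4

variable {𝕜 : Type} [Field 𝕜]

/-- An isomorphism of grid representations. -/
structure GridIso (A B : GridRep 𝕜) : Type where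
  e1 : A.V1 ≃ₗ[𝕜] B.V1
  e2 : A.V2 ≃ₗ[𝕜] B.V2
  e3 : A.V3 ≃ₗ[𝕜] B.V3
  e4 : A.V4 ≃ₗ[𝕜] B.V4
  c12 : e2.toLinearMap ∘ₗ A.f12 = B.f12 ∘ₗ e1.toLinearMap
  c13 : e3.toLinearMap ∘ₗ A.f13 = B.f13 ∘ₗ e1.toLinearMap
  c24 : e4.toLinearMap ∘ₗ A.f24 = B.f24 ∘ₗ e2.toLinearMap
  c34 : e4.toLinearMap ∘ₗ A.f34 = B.f34 ∘ₗ e3.toLinearMap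

/-- Direct sum of two grid representations. -/
def GridRep.dsum (A B : GridRep 𝕜) : GridRep 𝕜 where
  V1 := A.V1 × B.V1
  V2 := A.V2 × B.V2
  V3 := A.V3 × B.V3
  V4 := A.V4 × B.V4
  f12 := A.f12.prodMap B.f12
  f13 := A.f13.prodMap B.f13
  f24 := A.f24.prodMap B.f24
  f34 := A.f34.prodMap B.f34
  comm := by
    apply LinearMap.ext
    intro x
    have hA := LinearMap.congr_fun A.comm x.1
    have hB := LinearMap.congr_fun B.comm x.2
    simp only [LinearMap.comp_apply, LinearMap.prodMap_apply] at *
    exact Prod.ext hA hB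

/-- The zero representation predicate. -/
def GridRep.IsZero (A : GridRep 𝕜) : Prop :=
  Subsingleton A.V1 ∧ Subsingleton A.V2 ∧ Subsingleton A.V3 ∧ Subsingleton A.V4

/-- Indecomposability of a grid representation. -/
def GridRep.Indec (R : GridRep 𝕜) : Prop :=
  ¬ R.IsZero ∧ ∀ A B : GridRep 𝕜, Nonempty (GridIso R (A.dsum B)) → A.IsZero ∨ B.IsZero

/-- The "identity where possible" linear map `𝕜^a → 𝕜^b`. -/
def indMap (𝕜 : Type) [Field 𝕜] (a b : ℕ) : (Fin a → 𝕜) →ₗ[𝕜] (Fin b → 𝕜) where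
  toFun v := fun i => if h : (i : ℕ) < a then v ⟨i, h⟩ else 0
  map_add' u v := by funext i; by_cases h : (i : ℕ) < a <;> simp [h]
  map_smul' c v := by funext i; by_cases h : (i : ℕ) < a <;> simp [h]

@[simp] lemma indMap_apply (a b : ℕ) (v : Fin a → 𝕜) (i : Fin b) :
    indMap 𝕜 a b v i = if h : (i : ℕ) < a then v ⟨i, h⟩ else 0 := rfl

/-- The indicator representation `M(a,b,c,d)` (dimensions in `{0,1}` in practice), with
identity maps where possible and zero maps otherwise. -/
def M (𝕜 : Type) [Field 𝕜] (a b c d : ℕ)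
    (h : ∀ x : ℕ, x < a → x < d → (x < b ↔ x < c)) : GridRep 𝕜 where
  V1 := Fin a → 𝕜
  V2 := Fin b → 𝕜
  V3 := Fin c → 𝕜
  V4 := Fin d → 𝕜
  f12 := indMap 𝕜 a b
  f13 := indMap 𝕜 a c
  f24 := indMap 𝕜 b d
  f34 := indMap 𝕜 c d
  comm := by
    refine LinearMap.ext fun v => funext fun i => ?_
    have hd := i.isLt
    simp only [LinearMap.comp_apply, indMap_apply]
    by_cases ha : (i : ℕ) < a
    · have hbc := h i ha hd
      by_cases hb : (i : ℕ) < b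
      · have hc : (i : ℕ) < c := hbc.mp hb
        rw [dif_pos hb, dif_pos hc]
      · have hc : ¬ (i : ℕ) < c := fun hc' => hb (hbc.mpr hc')
        rw [dif_neg hb, dif_neg hc]
    · by_cases hb : (i : ℕ) < b <;> by_cases hc : (i : ℕ) < c <;>
        simp [hb, hc, ha]

/-- The eleven indicator representations of the commutative `2 × 2` grid. -/
def elevenList (𝕜 : Type) [Field 𝕜] : List (GridRep 𝕜) :=
  [M 𝕜 1 0 0 0 (by intro x hx hd; omega), M 𝕜 0 1 0 0 (by intro x hx hd; omega),
   M 𝕜 0 0 1 0 (by intro x hx hd; omega), M 𝕜 0 0 0 1 (by intro x hx hd; omega),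
   M 𝕜 1 1 0 0 (by intro x hx hd; omega), M 𝕜 1 0 1 0 (by intro x hx hd; omega),
   M 𝕜 0 1 0 1 (by intro x hx hd; omega), M 𝕜 0 0 1 1 (by intro x hx hd; omega),
   M 𝕜 1 1 1 0 (by intro x hx hd; omega), M 𝕜 0 1 1 1 (by intro x hx hd; omega),
   M 𝕜 1 1 1 1 (by intro x hx hd; omega)]

/-
Every nonzero representation `R` has a direct summand isomorphic to one of the eleven thin
representations `M ν`. Such a summand is split off by choosing, at each vertex `i` in the support
of `ν`, a vector `xᵢ` and a functional `φᵢ` with `φᵢ xᵢ = 1`, compatibly with the arrows. These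
come from a case analysis on the kernels and images of the arrows of `R` (the cases are symmetric
under exchanging vertices 2 and 3), so an indecomposable `R` is one of the `M ν`. Conversely, a
decomposition of `M ν` splits its dimension vector, and the identity arrows force the dimension
vector of each summand to be constant on the support of `ν`. That support is connected, so one
summand vanishes. The eleven dimension vectors are distinct, so no two of the `M ν` are isomorphic.
-/

open Module LinearMap

section LinearAlgebra

variable {U V W U' V' W' : Type} [AddCommGroup U] [Module 𝕜 U] [AddCommGroup V] [Module 𝕜 V]
  [AddCommGroup W] [Module 𝕜 W] [AddCommGroup U'] [Module 𝕜 U'] [AddCommGroup V'] [Module 𝕜 V']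
  [AddCommGroup W'] [Module 𝕜 W']

theorem comm_sq_trans {e : U ≃ₗ[𝕜] V} {e' : V ≃ₗ[𝕜] W} {d : U' ≃ₗ[𝕜] V'} {d' : V' ≃ₗ[𝕜] W'}
    {f : U →ₗ[𝕜] U'} {g : V →ₗ[𝕜] V'} {h : W →ₗ[𝕜] W'}
    (hf : d.toLinearMap ∘ₗ f = g ∘ₗ e.toLinearMap)
    (hg : d'.toLinearMap ∘ₗ g = h ∘ₗ e'.toLinearMap) :
    (d.trans d').toLinearMap ∘ₗ f = h ∘ₗ (e.trans e').toLinearMap := by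
  rw [LinearEquiv.coe_trans, LinearEquiv.coe_trans, LinearMap.comp_assoc, hf,
    ← LinearMap.comp_assoc, hg, LinearMap.comp_assoc]

variable (𝕜) in
theorem exists_dual_eq_one_of_notMem {S : Submodule 𝕜 V} {v : V} (hv : v ∉ S) :
    ∃ φ : Dual 𝕜 V, φ v = 1 ∧ ∀ s ∈ S, φ s = 0 := by
  obtain ⟨φ, hφS, hφv⟩ := LinearMap.exists_extend_of_notMem (0 : S →ₗ[𝕜] 𝕜) hv 1
  exact ⟨φ, hφv, fun s hs => LinearMap.congr_fun hφS ⟨s, hs⟩⟩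

variable (𝕜) in
theorem exists_dual_eq_one {v : V} (hv : v ≠ 0) : ∃ φ : Dual 𝕜 V, φ v = 1 := by
  obtain ⟨φ, hφ, -⟩ := exists_dual_eq_one_of_notMem 𝕜 (S := ⊥) (by simpa using hv)
  exact ⟨φ, hφ⟩

def prodKerEquivOfLeftInverse (i : U →ₗ[𝕜] V) (p : V →ₗ[𝕜] U) (h : Function.LeftInverse p i) :
    V ≃ₗ[𝕜] U × ker p :=
  { p.prod ((LinearMap.id - i ∘ₗ p).codRestrict (ker p) fun v => by simp [h (p v)]) with
    invFun := fun x => i x.1 + x.2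
    left_inv := fun v => by simp
    right_inv := fun ⟨u, k, hk⟩ => by ext <;> simp [h u, mem_ker.mp hk] }

@[simp] theorem prodKerEquivOfLeftInverse_apply {i : U →ₗ[𝕜] V} {p : V →ₗ[𝕜] U}
    (h : Function.LeftInverse p i) (v : V) :
    prodKerEquivOfLeftInverse i p h v = (p v, ⟨v - i (p v), by simp [h (p v)]⟩) := rfl

theorem mem_ker_of_comm {p : V →ₗ[𝕜] U} {p' : W →ₗ[𝕜] U'} {f : V →ₗ[𝕜] W} {g : U →ₗ[𝕜] U'}
    (h : p' ∘ₗ f = g ∘ₗ p) (v : V) (hv : v ∈ ker p) : f v ∈ ker p' := by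
  simpa [mem_ker.mp hv] using LinearMap.congr_fun h v

theorem prodKerEquivOfLeftInverse_comm {i : U →ₗ[𝕜] V} {p : V →ₗ[𝕜] U} {i' : U' →ₗ[𝕜] W}
    {p' : W →ₗ[𝕜] U'} (h : Function.LeftInverse p i) (h' : Function.LeftInverse p' i')
    {f : V →ₗ[𝕜] W} {g : U →ₗ[𝕜] U'} (hi : i' ∘ₗ g = f ∘ₗ i) (hp : p' ∘ₗ f = g ∘ₗ p) :
    (prodKerEquivOfLeftInverse i' p' h').toLinearMap ∘ₗ f
      = (g.prodMap (f.restrict (mem_ker_of_comm hp))) ∘ₗ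
        (prodKerEquivOfLeftInverse i p h).toLinearMap := by
  have hpv (v : V) : p' (f v) = g (p v) := LinearMap.congr_fun hp v
  have hiv (u : U) : i' (g u) = f (i u) := LinearMap.congr_fun hi u
  ext v <;> simp [hpv, hiv]

theorem finrank_eq_of_comm_prodMap {f : U →ₗ[𝕜] U'} (hf : Function.Bijective f)
    (e : U ≃ₗ[𝕜] V × W) (e' : U' ≃ₗ[𝕜] V' × W') {g : V →ₗ[𝕜] V'} {g' : W →ₗ[𝕜] W'}
    (h : e'.toLinearMap ∘ₗ f = g.prodMap g' ∘ₗ e.toLinearMap) : finrank 𝕜 V = finrank 𝕜 V' := by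
  have hg : ⇑(g.prodMap g') = e' ∘ f ∘ e.symm := funext fun x => by
    simpa using (LinearMap.congr_fun h (e.symm x)).symm
  have hbij : Function.Bijective (g.prodMap g') := by
    rw [hg]; exact e'.bijective.comp (hf.comp e.symm.bijective)
  exact (LinearEquiv.ofBijective g (Prod.map_bijective.1 hbij).1).finrank_eq

end LinearAlgebra

structure GridHom (A B : GridRep 𝕜) : Type where
  h1 : A.V1 →ₗ[𝕜] B.V1
  h2 : A.V2 →ₗ[𝕜] B.V2
  h3 : A.V3 →ₗ[𝕜] B.V3
  h4 : A.V4 →ₗ[𝕜] B.V4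
  c12 : h2 ∘ₗ A.f12 = B.f12 ∘ₗ h1
  c13 : h3 ∘ₗ A.f13 = B.f13 ∘ₗ h1
  c24 : h4 ∘ₗ A.f24 = B.f24 ∘ₗ h2
  c34 : h4 ∘ₗ A.f34 = B.f34 ∘ₗ h3

namespace GridHom

variable {R N : GridRep 𝕜}

def ker (π : GridHom R N) : GridRep 𝕜 where
  V1 := LinearMap.ker π.h1
  V2 := LinearMap.ker π.h2
  V3 := LinearMap.ker π.h3
  V4 := LinearMap.ker π.h4
  f12 := R.f12.restrict (mem_ker_of_comm π.c12)
  f13 := R.f13.restrict (mem_ker_of_comm π.c13)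
  f24 := R.f24.restrict (mem_ker_of_comm π.c24)
  f34 := R.f34.restrict (mem_ker_of_comm π.c34)
  comm := by ext v; exact LinearMap.congr_fun R.comm v

def isoDsumKer (ι : GridHom N R) (π : GridHom R N) (h1 : Function.LeftInverse π.h1 ι.h1)
    (h2 : Function.LeftInverse π.h2 ι.h2) (h3 : Function.LeftInverse π.h3 ι.h3)
    (h4 : Function.LeftInverse π.h4 ι.h4) : GridIso R (N.dsum π.ker) :=
  ⟨prodKerEquivOfLeftInverse _ _ h1, prodKerEquivOfLeftInverse _ _ h2,
    prodKerEquivOfLeftInverse _ _ h3, prodKerEquivOfLeftInverse _ _ h4,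
    prodKerEquivOfLeftInverse_comm h1 h2 ι.c12 π.c12,
    prodKerEquivOfLeftInverse_comm h1 h3 ι.c13 π.c13,
    prodKerEquivOfLeftInverse_comm h2 h4 ι.c24 π.c24,
    prodKerEquivOfLeftInverse_comm h3 h4 ι.c34 π.c34⟩

end GridHom

section Thin

variable {V W : Type} [AddCommGroup V] [Module 𝕜 V] [AddCommGroup W] [Module 𝕜 W]

def thinIncl (ν : ℕ) (x : V) : (Fin ν → 𝕜) →ₗ[𝕜] V := Fintype.linearCombination 𝕜 fun _ => x

def thinProj (ν : ℕ) (φ : Dual 𝕜 V) : V →ₗ[𝕜] Fin ν → 𝕜 := LinearMap.pi fun _ => φ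

/-- At a vertex carrying `𝕜 ^ ν`, `ν ∈ {0, 1}`, the vector `x` and the functional `φ` give the
inclusion and the projection of that summand. -/
abbrev IsThinVertex (ν : ℕ) (x : V) (φ : Dual 𝕜 V) : Prop := ν = 0 ∧ x = 0 ∧ φ = 0 ∨ ν = 1 ∧ φ x = 1

variable {m n : ℕ} {x : V} {y : W} {φ : Dual 𝕜 V} {ψ : Dual 𝕜 W}

theorem thinProj_leftInverse (hx : IsThinVertex m x φ) :
    Function.LeftInverse (thinProj m φ) (thinIncl m x) := by
  rcases hx with ⟨rfl, -⟩ | ⟨rfl, hφx⟩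
  · intro c; exact Subsingleton.elim _ _
  · intro c; ext i; fin_cases i; simp [thinIncl, thinProj, Fintype.linearCombination_apply, hφx]

theorem thinIncl_comm (f : V →ₗ[𝕜] W) (hx : IsThinVertex m x φ)
    (hy : IsThinVertex n y ψ) (h : m = 1 → f x = y) :
    thinIncl n y ∘ₗ indMap 𝕜 m n = f ∘ₗ thinIncl m x := by
  rcases hx with ⟨rfl, -⟩ | ⟨rfl, -⟩ <;> rcases hy with ⟨rfl, rfl, -⟩ | ⟨rfl, -⟩ <;>
    ext i
  all_goals first | exact i.elim0 | simp [thinIncl, Fintype.linearCombination_apply, h]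

theorem thinProj_comm (f : V →ₗ[𝕜] W) (hx : IsThinVertex m x φ)
    (hy : IsThinVertex n y ψ) (h : n = 1 → ψ ∘ₗ f = φ) :
    thinProj n ψ ∘ₗ f = indMap 𝕜 m n ∘ₗ thinProj m φ := by
  rcases hx with ⟨rfl, -, rfl⟩ | ⟨rfl, -⟩ <;> rcases hy with ⟨rfl, -⟩ | ⟨rfl, -⟩ <;>
    ext v i
  all_goals first | exact i.elim0 | simpa [thinProj] using LinearMap.congr_fun (h rfl) v

end Thin

theorem exists_iso_M_dsum (R : GridRep 𝕜) {ν1 ν2 ν3 ν4 : ℕ}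
    (hM : ∀ x : ℕ, x < ν1 → x < ν4 → (x < ν2 ↔ x < ν3))
    {x1 : R.V1} {x2 : R.V2} {x3 : R.V3} {x4 : R.V4}
    {φ1 : Dual 𝕜 R.V1} {φ2 : Dual 𝕜 R.V2} {φ3 : Dual 𝕜 R.V3} {φ4 : Dual 𝕜 R.V4}
    (hv1 : IsThinVertex ν1 x1 φ1) (hv2 : IsThinVertex ν2 x2 φ2) (hv3 : IsThinVertex ν3 x3 φ3)
    (hv4 : IsThinVertex ν4 x4 φ4)
    (h12 : (ν1 = 1 → R.f12 x1 = x2) ∧ (ν2 = 1 → φ2 ∘ₗ R.f12 = φ1))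
    (h13 : (ν1 = 1 → R.f13 x1 = x3) ∧ (ν3 = 1 → φ3 ∘ₗ R.f13 = φ1))
    (h24 : (ν2 = 1 → R.f24 x2 = x4) ∧ (ν4 = 1 → φ4 ∘ₗ R.f24 = φ2))
    (h34 : (ν3 = 1 → R.f34 x3 = x4) ∧ (ν4 = 1 → φ4 ∘ₗ R.f34 = φ3)) :
    ∃ K : GridRep 𝕜, Nonempty (GridIso R ((M 𝕜 ν1 ν2 ν3 ν4 hM).dsum K)) :=
  let ι : GridHom (M 𝕜 ν1 ν2 ν3 ν4 hM) R :=
    ⟨thinIncl ν1 x1, thinIncl ν2 x2, thinIncl ν3 x3, thinIncl ν4 x4,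
      thinIncl_comm R.f12 hv1 hv2 h12.1, thinIncl_comm R.f13 hv1 hv3 h13.1,
      thinIncl_comm R.f24 hv2 hv4 h24.1, thinIncl_comm R.f34 hv3 hv4 h34.1⟩
  let π : GridHom R (M 𝕜 ν1 ν2 ν3 ν4 hM) :=
    ⟨thinProj ν1 φ1, thinProj ν2 φ2, thinProj ν3 φ3, thinProj ν4 φ4,
      thinProj_comm R.f12 hv1 hv2 h12.2, thinProj_comm R.f13 hv1 hv3 h13.2,
      thinProj_comm R.f24 hv2 hv4 h24.2, thinProj_comm R.f34 hv3 hv4 h34.2⟩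
  ⟨π.ker, ⟨ι.isoDsumKer π (thinProj_leftInverse hv1) (thinProj_leftInverse hv2)
    (thinProj_leftInverse hv3) (thinProj_leftInverse hv4)⟩⟩

namespace GridRep

def swap (R : GridRep 𝕜) : GridRep 𝕜 where
  V1 := R.V1
  V2 := R.V3
  V3 := R.V2
  V4 := R.V4
  f12 := R.f13
  f13 := R.f12
  f24 := R.f34
  f34 := R.f24
  comm := R.comm.symm

def HasListedSummand (R : GridRep 𝕜) : Prop :=
  ∃ N ∈ elevenList 𝕜, ∃ K : GridRep 𝕜, Nonempty (GridIso R (N.dsum K))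

theorem swap_mem_elevenList {N : GridRep 𝕜} (hN : N ∈ elevenList 𝕜) :
    N.swap ∈ elevenList 𝕜 := by
  simp only [elevenList, List.mem_cons, List.not_mem_nil, or_false] at hN
  rcases hN with rfl | rfl | rfl | rfl | rfl | rfl | rfl | rfl | rfl | rfl | rfl <;>
    simp [elevenList, swap, M]

variable {R : GridRep 𝕜}

theorem HasListedSummand.of_swap (h : R.swap.HasListedSummand) : R.HasListedSummand :=
  let ⟨N, hN, K, ⟨e⟩⟩ := h
  ⟨N.swap, swap_mem_elevenList hN, K.swap,
    ⟨⟨e.e1, e.e3, e.e2, e.e4, e.c13, e.c12, e.c34, e.c24⟩⟩⟩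

theorem hasListedSummand_M1000 {x : R.V1} (hx : x ≠ 0) (ha : R.f12 x = 0) (hb : R.f13 x = 0) :
    R.HasListedSummand := by
  obtain ⟨φ, hφ⟩ := exists_dual_eq_one 𝕜 hx
  exact ⟨M 𝕜 1 0 0 0 (by omega), by simp [elevenList], exists_iso_M_dsum R _
    (.inr ⟨rfl, hφ⟩) (.inl ⟨rfl, rfl, rfl⟩) (.inl ⟨rfl, rfl, rfl⟩) (.inl ⟨rfl, rfl, rfl⟩)
    ⟨fun _ => ha, nofun⟩ ⟨fun _ => hb, nofun⟩ ⟨nofun, nofun⟩ ⟨nofun, nofun⟩⟩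

theorem hasListedSummand_M0001 {y : R.V4} (hy : y ∉ range R.f24 ⊔ range R.f34) :
    R.HasListedSummand := by
  obtain ⟨φ, hφ, hφS⟩ := exists_dual_eq_one_of_notMem 𝕜 hy
  exact ⟨M 𝕜 0 0 0 1 (by omega), by simp [elevenList], exists_iso_M_dsum R _
    (.inl ⟨rfl, rfl, rfl⟩) (.inl ⟨rfl, rfl, rfl⟩) (.inl ⟨rfl, rfl, rfl⟩) (.inr ⟨rfl, hφ⟩)
    ⟨nofun, nofun⟩ ⟨nofun, nofun⟩
    ⟨nofun, fun _ => LinearMap.ext fun v => hφS _ (Submodule.mem_sup_left (mem_range_self _ v))⟩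
    ⟨nofun, fun _ => LinearMap.ext fun v => hφS _ (Submodule.mem_sup_right (mem_range_self _ v))⟩⟩

theorem hasListedSummand_M0100 {x : R.V2} (hc : R.f24 x = 0) (hx : x ∉ range R.f12) :
    R.HasListedSummand := by
  obtain ⟨φ, hφ, hφS⟩ := exists_dual_eq_one_of_notMem 𝕜 hx
  exact ⟨M 𝕜 0 1 0 0 (by omega), by simp [elevenList], exists_iso_M_dsum R _
    (.inl ⟨rfl, rfl, rfl⟩) (.inr ⟨rfl, hφ⟩) (.inl ⟨rfl, rfl, rfl⟩) (.inl ⟨rfl, rfl, rfl⟩)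
    ⟨nofun, fun _ => LinearMap.ext fun v => hφS _ (mem_range_self _ v)⟩ ⟨nofun, nofun⟩
    ⟨fun _ => hc, nofun⟩ ⟨nofun, nofun⟩⟩

theorem hasListedSummand_M0101 {x : R.V2}
    (hx : R.f24 x ∉ range R.f34 ⊔ range (R.f24 ∘ₗ R.f12)) : R.HasListedSummand := by
  obtain ⟨φ, hφ, hφS⟩ := exists_dual_eq_one_of_notMem 𝕜 hx
  exact ⟨M 𝕜 0 1 0 1 (by omega), by simp [elevenList],
    exists_iso_M_dsum R _ (x2 := x) (φ2 := φ ∘ₗ R.f24)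
    (.inl ⟨rfl, rfl, rfl⟩) (.inr ⟨rfl, hφ⟩) (.inl ⟨rfl, rfl, rfl⟩) (.inr ⟨rfl, hφ⟩)
    ⟨nofun, fun _ => LinearMap.ext fun v => hφS _ (Submodule.mem_sup_right (mem_range_self _ v))⟩
    ⟨nofun, nofun⟩ ⟨fun _ => rfl, fun _ => rfl⟩
    ⟨nofun, fun _ => LinearMap.ext fun v => hφS _ (Submodule.mem_sup_left (mem_range_self _ v))⟩⟩

theorem hasListedSummand_M1111 {x : R.V1} (hx : R.f24 (R.f12 x) ≠ 0) : R.HasListedSummand := by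
  obtain ⟨φ, hφ⟩ := exists_dual_eq_one 𝕜 hx
  have hcomm : R.f34 (R.f13 x) = R.f24 (R.f12 x) := (LinearMap.congr_fun R.comm x).symm
  exact ⟨M 𝕜 1 1 1 1 (by omega), by simp [elevenList], exists_iso_M_dsum R _ (x1 := x)
    (φ1 := φ ∘ₗ R.f24 ∘ₗ R.f12) (φ2 := φ ∘ₗ R.f24) (φ3 := φ ∘ₗ R.f34)
    (.inr ⟨rfl, hφ⟩) (.inr ⟨rfl, hφ⟩) (.inr ⟨rfl, by rwa [comp_apply, hcomm]⟩) (.inr ⟨rfl, hφ⟩)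
    ⟨fun _ => rfl, fun _ => rfl⟩
    ⟨fun _ => rfl, fun _ => by rw [LinearMap.comp_assoc, ← R.comm]⟩
    ⟨fun _ => rfl, fun _ => rfl⟩ ⟨fun _ => hcomm, fun _ => rfl⟩⟩

theorem hasListedSummand_M1100 {x : R.V1} (hb : R.f13 x = 0) (ha : R.f12 x ≠ 0)
    (hca : R.f24 (R.f12 x) = 0) : R.HasListedSummand := by
  obtain ⟨φ, hφ⟩ := exists_dual_eq_one 𝕜 ha
  exact ⟨M 𝕜 1 1 0 0 (by omega), by simp [elevenList],
    exists_iso_M_dsum R _ (x1 := x) (φ1 := φ ∘ₗ R.f12)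
    (.inr ⟨rfl, hφ⟩) (.inr ⟨rfl, hφ⟩) (.inl ⟨rfl, rfl, rfl⟩) (.inl ⟨rfl, rfl, rfl⟩)
    ⟨fun _ => rfl, fun _ => rfl⟩ ⟨fun _ => hb, nofun⟩ ⟨fun _ => hca, nofun⟩ ⟨nofun, nofun⟩⟩

theorem hasListedSummand_M1110 {x : R.V1} (hx : x ≠ 0) (ha : Function.Injective R.f12)
    (hb : Function.Injective R.f13) (hca : R.f24 (R.f12 x) = 0) : R.HasListedSummand := by
  obtain ⟨φ, hφ⟩ := exists_dual_eq_one 𝕜 hx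
  obtain ⟨φ2, hφ2⟩ := dualMap_surjective_of_injective ha φ
  obtain ⟨φ3, hφ3⟩ := dualMap_surjective_of_injective hb φ
  have hdb : R.f34 (R.f13 x) = 0 := (LinearMap.congr_fun R.comm x).symm.trans hca
  exact ⟨M 𝕜 1 1 1 0 (by omega), by simp [elevenList], exists_iso_M_dsum R _
    (.inr ⟨rfl, hφ⟩) (.inr ⟨rfl, by rwa [← hφ2] at hφ⟩) (.inr ⟨rfl, by rwa [← hφ3] at hφ⟩)
    (.inl ⟨rfl, rfl, rfl⟩) ⟨fun _ => rfl, fun _ => hφ2⟩ ⟨fun _ => rfl, fun _ => hφ3⟩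
    ⟨fun _ => hca, nofun⟩ ⟨fun _ => hdb, nofun⟩⟩

theorem hasListedSummand_M0111 [Subsingleton R.V1] {x2 : R.V2} {x3 : R.V3} {y : R.V4}
    (hy : y ≠ 0) (hc : R.f24 x2 = y) (hd : R.f34 x3 = y) : R.HasListedSummand := by
  obtain ⟨φ, hφ⟩ := exists_dual_eq_one 𝕜 hy
  have hzero (f : Dual 𝕜 R.V1) : f = 0 := LinearMap.ext fun v => by simp [Subsingleton.elim v 0]
  exact ⟨M 𝕜 0 1 1 1 (by omega), by simp [elevenList], exists_iso_M_dsum R _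
    (.inl ⟨rfl, rfl, rfl⟩) (.inr ⟨rfl, by rwa [comp_apply, hc]⟩)
    (.inr ⟨rfl, by rwa [comp_apply, hd]⟩) (.inr ⟨rfl, hφ⟩)
    ⟨nofun, fun _ => hzero _⟩ ⟨nofun, fun _ => hzero _⟩ ⟨fun _ => hc, fun _ => rfl⟩
    ⟨fun _ => hd, fun _ => rfl⟩⟩

theorem hasListedSummand_of_nontrivial_V1 [Nontrivial R.V1]
    (hker : ∀ x, R.f12 x = 0 → R.f13 x = 0 → x = 0) (hca : ∀ x, R.f24 (R.f12 x) = 0) :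
    R.HasListedSummand := by
  by_cases hb : ∃ x, R.f13 x = 0 ∧ x ≠ 0
  · obtain ⟨x, hbx, hx⟩ := hb
    exact hasListedSummand_M1100 hbx (fun hax => hx (hker x hax hbx)) (hca x)
  by_cases ha : ∃ x, R.f12 x = 0 ∧ x ≠ 0
  · obtain ⟨x, hax, hx⟩ := ha
    have hdb : R.f34 (R.f13 x) = 0 := (LinearMap.congr_fun R.comm x).symm.trans (hca x)
    exact (hasListedSummand_M1100 (R := R.swap) hax (fun hbx => hx (hker x hax hbx)) hdb).of_swap
  push Not at ha hb
  obtain ⟨x, hx⟩ := exists_ne (0 : R.V1)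
  exact hasListedSummand_M1110 hx ((injective_iff_map_eq_zero _).2 ha)
    ((injective_iff_map_eq_zero _).2 hb) (hca x)

theorem hasListedSummand_of_subsingleton_V1 [Subsingleton R.V1] (hR : ¬ R.IsZero)
    (hV4 : ∀ y, y ∈ range R.f24 ⊔ range R.f34) (hker24 : ∀ x, R.f24 x = 0 → x ∈ range R.f12)
    (hker34 : ∀ x, R.f34 x = 0 → x ∈ range R.f13)
    (him24 : ∀ x, R.f24 x ∈ range R.f34 ⊔ range (R.f24 ∘ₗ R.f12))
    (him34 : ∀ x, R.f34 x ∈ range R.f24 ⊔ range (R.f34 ∘ₗ R.f13)) : R.HasListedSummand := by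
  have hrange {W : Type} [AddCommGroup W] [Module 𝕜 W] (f : R.V1 →ₗ[𝕜] W) : range f = ⊥ :=
    range_eq_bot.2 (LinearMap.ext fun v => by simp [Subsingleton.elim v 0])
  rcases subsingleton_or_nontrivial R.V4 with h4 | h4
  · refine absurd ⟨inferInstance, ?_, ?_, h4⟩ hR
    · exact subsingleton_of_forall_eq 0 fun x => by
        simpa [hrange] using hker24 x (Subsingleton.elim _ _)
    · exact subsingleton_of_forall_eq 0 fun x => by
        simpa [hrange] using hker34 x (Subsingleton.elim _ _)
  obtain ⟨y, hy⟩ := exists_ne (0 : R.V4)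
  have hdc : range R.f34 ≤ range R.f24 := by rintro _ ⟨x, rfl⟩; simpa [hrange] using him34 x
  have hcd : range R.f24 ≤ range R.f34 := by rintro _ ⟨x, rfl⟩; simpa [hrange] using him24 x
  obtain ⟨x2, hx2⟩ : y ∈ range R.f24 := by simpa [sup_eq_left.2 hdc] using hV4 y
  obtain ⟨x3, hx3⟩ : y ∈ range R.f34 := by simpa [sup_eq_right.2 hcd] using hV4 y
  exact hasListedSummand_M0111 hy hx2 hx3

theorem hasListedSummand_of_not_isZero (hR : ¬ R.IsZero) : R.HasListedSummand := by
  by_cases h1 : ∃ x : R.V1, R.f12 x = 0 ∧ R.f13 x = 0 ∧ x ≠ 0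
  · obtain ⟨x, ha, hb, hx⟩ := h1
    exact hasListedSummand_M1000 hx ha hb
  by_cases h2 : ∃ y : R.V4, y ∉ range R.f24 ⊔ range R.f34
  · obtain ⟨y, hy⟩ := h2
    exact hasListedSummand_M0001 hy
  by_cases h3 : ∃ x : R.V2, R.f24 x = 0 ∧ x ∉ range R.f12
  · obtain ⟨x, hc, hx⟩ := h3
    exact hasListedSummand_M0100 hc hx
  by_cases h4 : ∃ x : R.V3, R.f34 x = 0 ∧ x ∉ range R.f13
  · obtain ⟨x, hd, hx⟩ := h4
    exact (hasListedSummand_M0100 (R := R.swap) hd hx).of_swap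
  by_cases h5 : ∃ x : R.V2, R.f24 x ∉ range R.f34 ⊔ range (R.f24 ∘ₗ R.f12)
  · obtain ⟨x, hx⟩ := h5
    exact hasListedSummand_M0101 hx
  by_cases h6 : ∃ x : R.V3, R.f34 x ∉ range R.f24 ⊔ range (R.f34 ∘ₗ R.f13)
  · obtain ⟨x, hx⟩ := h6
    exact (hasListedSummand_M0101 (R := R.swap) hx).of_swap
  by_cases h7 : ∃ x : R.V1, R.f24 (R.f12 x) ≠ 0
  · obtain ⟨x, hx⟩ := h7
    exact hasListedSummand_M1111 hx
  push Not at h1 h2 h3 h4 h5 h6 h7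
  rcases subsingleton_or_nontrivial R.V1 with hV1 | hV1
  · exact hasListedSummand_of_subsingleton_V1 hR h2 h3 h4 h5 h6
  · exact hasListedSummand_of_nontrivial_V1 h1 h7

noncomputable def dimVector (R : GridRep 𝕜) : ℕ × ℕ × ℕ × ℕ :=
  (finrank 𝕜 R.V1, finrank 𝕜 R.V2, finrank 𝕜 R.V3, finrank 𝕜 R.V4)

theorem isZero_iff_dimVector_eq_zero {R : GridRep 𝕜} : R.IsZero ↔ R.dimVector = 0 := by
  simp [IsZero, dimVector, Module.finrank_zero_iff]

theorem dimVector_dsum (A B : GridRep 𝕜) : (A.dsum B).dimVector = A.dimVector + B.dimVector := by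
  simp only [dimVector, Prod.mk_add_mk, Prod.mk.injEq]
  exact ⟨finrank_prod .., finrank_prod .., finrank_prod .., finrank_prod ..⟩

theorem dimVector_M {a b c d : ℕ} (h : ∀ x : ℕ, x < a → x < d → (x < b ↔ x < c)) :
    (M 𝕜 a b c d h).dimVector = (a, b, c, d) := by
  simp only [dimVector, Prod.mk.injEq]
  exact ⟨finrank_fin_fun 𝕜, finrank_fin_fun 𝕜, finrank_fin_fun 𝕜, finrank_fin_fun 𝕜⟩

def isoDsumOfIsZero (A : GridRep 𝕜) {K : GridRep 𝕜} (hK : K.IsZero) : GridIso (A.dsum K) A :=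
  letI : Unique K.V1 := @uniqueOfSubsingleton _ hK.1 0
  letI : Unique K.V2 := @uniqueOfSubsingleton _ hK.2.1 0
  letI : Unique K.V3 := @uniqueOfSubsingleton _ hK.2.2.1 0
  letI : Unique K.V4 := @uniqueOfSubsingleton _ hK.2.2.2 0
  ⟨LinearEquiv.prodUnique, LinearEquiv.prodUnique, LinearEquiv.prodUnique, LinearEquiv.prodUnique,
    rfl, rfl, rfl, rfl⟩

end GridRep

namespace GridIso

variable {A B C : GridRep 𝕜}

theorem dimVector_eq (e : GridIso A B) : A.dimVector = B.dimVector := by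
  simp [GridRep.dimVector, e.e1.finrank_eq, e.e2.finrank_eq, e.e3.finrank_eq, e.e4.finrank_eq]

def trans (u : GridIso A B) (v : GridIso B C) : GridIso A C :=
  ⟨u.e1.trans v.e1, u.e2.trans v.e2, u.e3.trans v.e3, u.e4.trans v.e4,
    comm_sq_trans u.c12 v.c12, comm_sq_trans u.c13 v.c13, comm_sq_trans u.c24 v.c24,
    comm_sq_trans u.c34 v.c34⟩

end GridIso

theorem indMap_self (n : ℕ) : indMap 𝕜 n n = LinearMap.id := by
  ext v i; simp

-- `hconn` says that the support of `(a, b, c, d)` is connected along the arrows of the square.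
theorem indec_M {a b c d : ℕ} (h : ∀ x : ℕ, x < a → x < d → (x < b ↔ x < c))
    (hne : (a, b, c, d) ≠ 0)
    (hconn : ∀ x1 x2 x3 x4 : ℕ, x1 ≤ a → x2 ≤ b → x3 ≤ c → x4 ≤ d →
      (a = 1 → b = 1 → x1 = x2) → (a = 1 → c = 1 → x1 = x3) → (b = 1 → d = 1 → x2 = x4) →
      (c = 1 → d = 1 → x3 = x4) →
      x1 = 0 ∧ x2 = 0 ∧ x3 = 0 ∧ x4 = 0 ∨ x1 = a ∧ x2 = b ∧ x3 = c ∧ x4 = d) :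
    (M 𝕜 a b c d h).Indec := by
  refine ⟨by rwa [GridRep.isZero_iff_dimVector_eq_zero, GridRep.dimVector_M], fun A B ⟨e⟩ => ?_⟩
  have hbij (n : ℕ) : Function.Bijective (indMap 𝕜 n n) := by
    rw [indMap_self]; exact Function.bijective_id
  have h12 : a = 1 → b = 1 → finrank 𝕜 A.V1 = finrank 𝕜 A.V2 := by
    rintro rfl rfl; exact finrank_eq_of_comm_prodMap (hbij 1) e.e1 e.e2 e.c12
  have h13 : a = 1 → c = 1 → finrank 𝕜 A.V1 = finrank 𝕜 A.V3 := by
    rintro rfl rfl; exact finrank_eq_of_comm_prodMap (hbij 1) e.e1 e.e3 e.c13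
  have h24 : b = 1 → d = 1 → finrank 𝕜 A.V2 = finrank 𝕜 A.V4 := by
    rintro rfl rfl; exact finrank_eq_of_comm_prodMap (hbij 1) e.e2 e.e4 e.c24
  have h34 : c = 1 → d = 1 → finrank 𝕜 A.V3 = finrank 𝕜 A.V4 := by
    rintro rfl rfl; exact finrank_eq_of_comm_prodMap (hbij 1) e.e3 e.e4 e.c34
  have hdim := e.dimVector_eq
  rw [GridRep.dimVector_M, GridRep.dimVector_dsum] at hdim
  simp only [GridRep.isZero_iff_dimVector_eq_zero, GridRep.dimVector, Prod.mk_add_mk,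
    Prod.mk.injEq, Prod.mk_eq_zero] at hdim ⊢
  have := hconn _ _ _ _ (by omega) (by omega) (by omega) (by omega) h12 h13 h24 h34
  omega

theorem indec_of_mem_elevenList {N : GridRep 𝕜} (hN : N ∈ elevenList 𝕜) : N.Indec := by
  simp only [elevenList, List.mem_cons, List.not_mem_nil, or_false] at hN
  rcases hN with rfl | rfl | rfl | rfl | rfl | rfl | rfl | rfl | rfl | rfl | rfl <;>
    exact indec_M _ (by decide) (by omega)

theorem exists_iso_of_indec {R : GridRep 𝕜} (hR : R.Indec) :
    ∃ N ∈ elevenList 𝕜, Nonempty (GridIso R N) := by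
  obtain ⟨N, hN, K, ⟨e⟩⟩ := R.hasListedSummand_of_not_isZero hR.1
  have hK : K.IsZero := (hR.2 N K ⟨e⟩).resolve_left (indec_of_mem_elevenList hN).1
  exact ⟨N, hN, ⟨e.trans (N.isoDsumOfIsZero hK)⟩⟩

theorem pairwise_isEmpty_gridIso_elevenList :
    (elevenList 𝕜).Pairwise fun A B => IsEmpty (GridIso A B) := by
  have h : ((elevenList 𝕜).map GridRep.dimVector).Pairwise (· ≠ ·) := by
    simp only [elevenList, List.map_cons, List.map_nil, GridRep.dimVector_M]
    decide
  exact (List.pairwise_map.1 h).imp fun hne => ⟨fun e => hne e.dimVector_eq⟩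

/-- The commutative `2 × 2` grid has exactly eleven isomorphism classes of indecomposable
representations, namely the eleven indicator representations: every indecomposable is
isomorphic to one of them, each of them is indecomposable, and they are pairwise
non-isomorphic. -/
theorem stmt11 (𝕜 : Type) [Field 𝕜] :
    (∀ R : GridRep 𝕜, R.Indec → ∃ N ∈ elevenList 𝕜, Nonempty (GridIso R N)) ∧
    (∀ N ∈ elevenList 𝕜, N.Indec) ∧
    (elevenList 𝕜).Pairwise fun A B => IsEmpty (GridIso A B) :=
  ⟨fun _ => exists_iso_of_indec, fun _ => indec_of_mem_elevenList,
    pairwise_isEmpty_gridIso_elevenList⟩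
end

section
/- Consider the combinatorial crystal datum $B_C$ for the $2\times 2$ grid: elements are triples $(\nu; r_1, r_2)$ with $\nu \in \mathbb{N}^4$ and either ($\nu_1+\nu_4 \ge \nu_2+\nu_3$, $r_1+r_2 = \nu_2+\nu_3$, $r_1 \le \nu_1$, $r_2 \le \nu_4$) or ($\nu_1+\nu_4 < \nu_2+\nu_3$, $r_1 = \nu_1$, $r_2 = \nu_4$). Define $\tilde e_1, \tilde e_2, \tilde e_3, \tilde e_4$ by the explicit case formulas of Theorem 5.5(1) of the paper. Then for every element $(\nu; r_1, r_2)$ of $B_C$, the composition $\tilde e_4^{r_2} \tilde e_3^{\nu_3} \tilde e_2^{\nu_2} \tilde e_1^{\nu_1} \tilde e_4^{\nu_4 - r_2}$ applied to $(\nu; r_1, r_2)$ is defined (never hits $0$) and equals the unique element $(0,0,0,0; 0, 0)$ of weight zero. In particular, the crystal graph of $B_C$ is connected. -/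
/-- Elements of the crystal `B_C` for the `2 × 2` grid: `((ν₁,ν₂,ν₃,ν₄),(r₁,r₂))`. -/
abbrev BCElt : Type := (ℕ × ℕ × ℕ × ℕ) × ℕ × ℕ

/-- Validity of a triple `(ν; r₁, r₂)` as a label of an irreducible component. -/
def BCValid : BCElt → Prop
  | ((ν₁, ν₂, ν₃, ν₄), r₁, r₂) =>
    (ν₂ + ν₃ ≤ ν₁ + ν₄ ∧ r₁ + r₂ = ν₂ + ν₃ ∧ r₁ ≤ ν₁ ∧ r₂ ≤ ν₄) ∨
    (ν₁ + ν₄ < ν₂ + ν₃ ∧ r₁ = ν₁ ∧ r₂ = ν₄)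

/-- The raising operator `ẽ₁` (Theorem 5.5(1)). -/
def bce1 : BCElt → Option BCElt
  | ((ν₁, ν₂, ν₃, ν₄), r₁, r₂) =>
    if ν₁ + ν₄ ≤ ν₂ + ν₃ then some ((ν₁ - 1, ν₂, ν₃, ν₄), r₁ - 1, r₂)
    else if r₁ < ν₁ then some ((ν₁ - 1, ν₂, ν₃, ν₄), r₁, r₂)
    else none

/-- The raising operator `ẽ₂` (Theorem 5.5(1)). -/
def bce2 : BCElt → Option BCElt
  | ((ν₁, ν₂, ν₃, ν₄), r₁, r₂) =>
    if r₁ < ν₂ then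
      (if ν₁ + ν₄ < ν₂ + ν₃ then some ((ν₁, ν₂ - 1, ν₃, ν₄), r₁, r₂)
        else some ((ν₁, ν₂ - 1, ν₃, ν₄), r₁, r₂ - 1))
    else none

/-- The raising operator `ẽ₃` (Theorem 5.5(1)). -/
def bce3 : BCElt → Option BCElt
  | ((ν₁, ν₂, ν₃, ν₄), r₁, r₂) =>
    if r₁ < ν₃ then
      (if ν₁ + ν₄ < ν₂ + ν₃ then some ((ν₁, ν₂, ν₃ - 1, ν₄), r₁, r₂)
        else some ((ν₁, ν₂, ν₃ - 1, ν₄), r₁, r₂ - 1))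
    else none

/-- The raising operator `ẽ₄` (Theorem 5.5(1)). -/
def bce4 : BCElt → Option BCElt
  | ((ν₁, ν₂, ν₃, ν₄), r₁, r₂) =>
    if r₂ < ν₄ then some ((ν₁, ν₂, ν₃, ν₄ - 1), r₁, r₂) else none

/-- Iterated application of a partial crystal operator (with `0 = none` absorbing). -/
def bcIter (e : BCElt → Option BCElt) : ℕ → Option BCElt → Option BCElt
  | 0, o => o
  | n + 1, o => (bcIter e n o).bind e

lemma bce1_eq (a b c d r s : ℕ) : bce1 ((a, b, c, d), r, s) =
    if a + d ≤ b + c then some ((a - 1, b, c, d), r - 1, s)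
    else if r < a then some ((a - 1, b, c, d), r, s) else none := rfl

lemma bce2_eq (a b c d r s : ℕ) : bce2 ((a, b, c, d), r, s) =
    if r < b then
      (if a + d < b + c then some ((a, b - 1, c, d), r, s)
        else some ((a, b - 1, c, d), r, s - 1))
    else none := rfl

lemma bce3_eq (a b c d r s : ℕ) : bce3 ((a, b, c, d), r, s) =
    if r < c then
      (if a + d < b + c then some ((a, b, c - 1, d), r, s)
        else some ((a, b, c - 1, d), r, s - 1))
    else none := rfl

lemma bce4_eq (a b c d r s : ℕ) : bce4 ((a, b, c, d), r, s) =
    (if s < d then some ((a, b, c, d - 1), r, s) else none) := rfl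

lemma bcIter_zero (e : BCElt → Option BCElt) (o : Option BCElt) : bcIter e 0 o = o := rfl

lemma bcIter_succ' (e : BCElt → Option BCElt) (k : ℕ) (o : Option BCElt) :
    bcIter e (k + 1) o = bcIter e k (o.bind e) := by
  induction k generalizing o with
  | zero => rfl
  | succ n ih =>
      show (bcIter e (n+1) o).bind e = (bcIter e n (o.bind e)).bind e
      rw [ih]

lemma L4 (k : ℕ) : ∀ a b c m r₁ r₂ : ℕ, r₂ + k ≤ m →
    bcIter bce4 k (some ((a, b, c, m), r₁, r₂)) = some ((a, b, c, m - k), r₁, r₂) := by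
  induction k with
  | zero => intro a b c m r₁ r₂ _; simp [bcIter]
  | succ n ih =>
      intro a b c m r₁ r₂ h
      rw [bcIter_succ', Option.bind_some, bce4_eq, if_pos (show r₂ < m by omega)]
      rw [ih a b c (m - 1) r₁ r₂ (by omega), show m - 1 - n = m - (n + 1) by omega]

lemma L1b (k : ℕ) : ∀ s b c t : ℕ, s + t = b + c →
    bcIter bce1 k (some ((s + k, b, c, t), s, t)) = some ((s, b, c, t), s, t) := by
  induction k with
  | zero => intro s b c t _; rfl
  | succ n ih =>
      intro s b c t h
      rw [bcIter_succ', Option.bind_some, bce1_eq,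
        if_neg (show ¬ s + (n+1) + t ≤ b + c by omega),
        if_pos (show s < s + (n+1) by omega),
        show s + (n + 1) - 1 = s + n by omega, ih s b c t h]

lemma L1a (m : ℕ) : ∀ b c t : ℕ, m + t ≤ b + c →
    bcIter bce1 m (some ((m, b, c, t), m, t)) = some ((0, b, c, t), 0, t) := by
  induction m with
  | zero => intro b c t _; rfl
  | succ n ih =>
      intro b c t h
      rw [bcIter_succ', Option.bind_some, bce1_eq, if_pos (show n + 1 + t ≤ b + c from h),
        show n + 1 - 1 = n by omega, ih b c t (by omega)]

lemma L2 (B : ℕ) : ∀ C t : ℕ,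
    bcIter bce2 B (some ((0, B, C, t), 0, min t (B + C))) = some ((0, 0, C, t), 0, min t C) := by
  induction B with
  | zero => intro C t; simp [bcIter]
  | succ n ih =>
      intro C t
      rw [bcIter_succ', Option.bind_some, bce2_eq, if_pos (show 0 < n + 1 by omega)]
      by_cases hc : 0 + t < n + 1 + C
      · rw [if_pos hc, show min t (n + 1 + C) = min t (n + C) by omega,
          show n + 1 - 1 = n by omega, ih C t]
      · rw [if_neg hc, show min t (n + 1 + C) - 1 = min t (n + C) by omega,
          show n + 1 - 1 = n by omega, ih C t]

lemma L3 (B : ℕ) : ∀ t : ℕ,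
    bcIter bce3 B (some ((0, 0, B, t), 0, min t B)) = some ((0, 0, 0, t), 0, 0) := by
  induction B with
  | zero => intro t; simp [bcIter]
  | succ n ih =>
      intro t
      rw [bcIter_succ', Option.bind_some, bce3_eq, if_pos (show 0 < n + 1 by omega)]
      by_cases hc : 0 + t < 0 + (n + 1)
      · rw [if_pos hc, show min t (n + 1) = min t n by omega,
          show n + 1 - 1 = n by omega, ih t]
      · rw [if_neg hc, show min t (n + 1) - 1 = min t n by omega,
          show n + 1 - 1 = n by omega, ih t]

lemma bcIter_add (e : BCElt → Option BCElt) (a b : ℕ) (o : Option BCElt) :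
    bcIter e (a + b) o = bcIter e b (bcIter e a o) := by
  induction b with
  | zero => rfl
  | succ n ih =>
      show (bcIter e (a + n) o).bind e = (bcIter e n (bcIter e a o)).bind e
      rw [ih]

lemma L1 (m s b c t : ℕ) (h1 : s ≤ m) (h2 : s + t = b + c) :
    bcIter bce1 m (some ((m, b, c, t), s, t)) = some ((0, b, c, t), 0, t) := by
  have hm : m = (m - s) + s := by omega
  rw [hm, bcIter_add, add_comm (m - s) s, L1b (m - s) s b c t h2]
  exact L1a s b c t (by omega)

/-- For every element `(ν; r₁, r₂)` of `B_C` for the `2 × 2` grid, the composition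
`ẽ₄^{r₂} ẽ₃^{ν₃} ẽ₂^{ν₂} ẽ₁^{ν₁} ẽ₄^{ν₄ - r₂}` is everywhere defined on it and yields the
unique weight-zero element; in particular the crystal graph of `B_C` is connected. -/
theorem stmt17 (ν₁ ν₂ ν₃ ν₄ r₁ r₂ : ℕ) (h : BCValid ((ν₁, ν₂, ν₃, ν₄), r₁, r₂)) :
    bcIter bce4 r₂ (bcIter bce3 ν₃ (bcIter bce2 ν₂ (bcIter bce1 ν₁
        (bcIter bce4 (ν₄ - r₂) (some ((ν₁, ν₂, ν₃, ν₄), r₁, r₂)))))) =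
      some ((0, 0, 0, 0), 0, 0) := by

  rcases h with ⟨h1, hr, h3, h4⟩ | ⟨h1, hr1, hr2⟩
  · rw [L4 (ν₄ - r₂) ν₁ ν₂ ν₃ ν₄ r₁ r₂ (by omega)]
    rw [show ν₄ - (ν₄ - r₂) = r₂ by omega]
    rw [L1 ν₁ r₁ ν₂ ν₃ r₂ h3 hr]
    rw [show (some ((0, ν₂, ν₃, r₂), 0, r₂) : Option BCElt)
        = some ((0, ν₂, ν₃, r₂), 0, min r₂ (ν₂ + ν₃)) by rw [min_eq_left (by omega)]]
    rw [L2 ν₂ ν₃ r₂, L3 ν₃ r₂, L4 r₂ 0 0 0 r₂ 0 0 (by omega)]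
    simp
  · rw [hr1, hr2, Nat.sub_self, bcIter_zero]
    rw [L1a ν₁ ν₂ ν₃ ν₄ (le_of_lt h1)]
    rw [show (some ((0, ν₂, ν₃, ν₄), 0, ν₄) : Option BCElt)
        = some ((0, ν₂, ν₃, ν₄), 0, min ν₄ (ν₂ + ν₃)) by rw [min_eq_left (by omega)]]
    rw [L2 ν₂ ν₃ ν₄, L3 ν₃ ν₄, L4 ν₄ 0 0 0 ν₄ 0 0 (by omega)]
    simp
end
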